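/- Let n ≥ 3 and let 2^n be the Boolean lattice of all subsets of an n-element set. Then the strong metric dimension of G^c(2^n) equals 2^n − 2^{n-1} − 1. -/

import Mathlib

/-- Vertices: nonempty proper subsets of an `n`-element set. -/
def BVert (n : ℕ) : Type :=
  {s : Finset (Fin n) // s ≠ ∅ ∧ s ≠ Finset.univ}

/-- The complement `G^c(2^n)` of the zero-divisor graph of the Boolean lattice `2^n`. -/
def GcB (n : ℕ) : SimpleGraph (BVert n) where
  Adj s t := s ≠ t ∧ s.1 ∩ t.1 ≠ ∅
  symm := ⟨fun s t h => ⟨h.1.symm, by rw [Finset.inter_comm]; exact h.2⟩⟩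
  loopless := ⟨fun s h => h.1 rfl⟩

/-- `w` strongly resolves `u` and `v` in `G`. -/
def StronglyResolves {V : Type*} (G : SimpleGraph V) (w u v : V) : Prop :=
  G.dist u w = G.dist u v + G.dist v w ∨ G.dist v w = G.dist v u + G.dist u w

/-- A strong resolving set for `G`. -/
def IsStrongResolvingSet {V : Type*} (G : SimpleGraph V) (W : Set V) : Prop :=
  ∀ u v : V, u ≠ v → ∃ w ∈ W, StronglyResolves G w u v

/-- The strong metric dimension of `G`: the minimum cardinality of a (finite) strong
resolving set. -/
noncomputable def sdim {V : Type*} (G : SimpleGraph V) : ℕ :=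
  sInf {k | ∃ W : Set V, W.Finite ∧ IsStrongResolvingSet G W ∧ Nat.card W = k}

/-!
For `n ≥ 3` two distinct vertices of `G^c(2^n)` are at distance `1` if they meet and at
distance `2` if they are disjoint, so the diameter is `2`. A pair at maximal distance can only
be strongly resolved by one of its own members; hence the vertices outside a strong resolving
set form an intersecting family, which together with the full set has at most `2^(n-1)`
members. Conversely the sets avoiding a fixed point `z` strongly resolve: two sets `u ⊄ v`
containing `z` are resolved by the complement of `v`, which lies at distance `2` from `v`
and is adjacent to `u`.
-/

namespace SimpleGraph

variable {V : Type*} {G : SimpleGraph V} {u v w : V}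

theorem dist_eq_two_of_adj_of_adj (huv : u ≠ v) (hnadj : ¬G.Adj u v) (huw : G.Adj u w)
    (hwv : G.Adj w v) : G.dist u v = 2 :=
  le_antisymm (by simpa using dist_le (.cons huw (.cons hwv .nil)))
    ((huw.reachable.trans hwv.reachable).one_lt_dist_of_ne_of_not_adj huv hnadj)

end SimpleGraph

section StrongResolving

variable {V : Type*} {G : SimpleGraph V}

theorem stronglyResolves_self_left (u v : V) : StronglyResolves G u u v :=
  Or.inr (by simp)

theorem stronglyResolves_self_right (u v : V) : StronglyResolves G v u v :=
  Or.inl (by simp)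

theorem StronglyResolves.symm {w u v : V} (h : StronglyResolves G w u v) :
    StronglyResolves G w v u :=
  Or.symm h

theorem StronglyResolves.eq_or_eq_of_forall_dist_le (hG : G.Preconnected) {w u v : V}
    (hmax : ∀ x y, G.dist x y ≤ G.dist u v) (h : StronglyResolves G w u v) :
    w = u ∨ w = v := by
  have hvu := G.dist_comm (u := v) (v := u)
  rcases h with h | h
  · have := hmax u w
    exact Or.inr ((hG v w).dist_eq_zero_iff.1 (by omega)).symm
  · have := hmax v w
    exact Or.inl ((hG u w).dist_eq_zero_iff.1 (by omega)).symm

theorem IsStrongResolvingSet.mem_or_mem_of_forall_dist_le (hG : G.Preconnected) {W : Set V}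
    (hW : IsStrongResolvingSet G W) {u v : V} (huv : u ≠ v)
    (hmax : ∀ x y, G.dist x y ≤ G.dist u v) : u ∈ W ∨ v ∈ W := by
  obtain ⟨w, hwW, hw⟩ := hW u v huv
  rcases hw.eq_or_eq_of_forall_dist_le hG hmax with rfl | rfl
  exacts [Or.inl hwW, Or.inr hwW]

end StrongResolving

namespace BVert

variable {n : ℕ}

instance : Fintype (BVert n) := by unfold BVert; infer_instance

theorem val_injective : Function.Injective (Subtype.val : BVert n → Finset (Fin n)) :=
  Subtype.val_injective

theorem val_nonempty (u : BVert n) : u.1.Nonempty :=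
  Finset.nonempty_iff_ne_empty.2 u.2.1

def compl (u : BVert n) : BVert n :=
  ⟨u.1ᶜ, fun h => u.2.2 (Finset.compl_eq_empty_iff _ |>.1 h),
    fun h => u.2.1 (Finset.compl_eq_univ_iff _ |>.1 h)⟩

@[simp]
theorem val_compl (u : BVert n) : u.compl.1 = u.1ᶜ := rfl

theorem card_eq (hn : 0 < n) : Nat.card (BVert n) = 2 ^ n - 2 := by
  have hne : (∅ : Finset (Fin n)) ≠ Finset.univ :=
    (Finset.univ_nonempty_iff.2 ⟨⟨0, hn⟩⟩).ne_empty.symm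
  change Nat.card {s : Finset (Fin n) // s ≠ ∅ ∧ s ≠ Finset.univ} = _
  rw [Nat.card_eq_fintype_card, Fintype.card_subtype]
  have : Finset.univ.filter (fun s : Finset (Fin n) => s ≠ ∅ ∧ s ≠ Finset.univ) =
      Finset.univ \ {∅, Finset.univ} := by
    ext s; simp
  rw [this, Finset.card_sdiff_of_subset (Finset.subset_univ _), Finset.card_pair hne,
    Finset.card_univ, Fintype.card_finset, Fintype.card_fin]

theorem ncard_setOf_notMem_le (z : Fin n) :
    {u : BVert n | z ∉ u.1}.ncard ≤ 2 ^ (n - 1) - 1 := by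
  calc {u : BVert n | z ∉ u.1}.ncard
      ≤ (↑((Finset.univ.erase z).powerset.erase ∅) : Set (Finset (Fin n))).ncard :=
        Set.ncard_le_ncard_of_injOn Subtype.val
          (fun u hu => Finset.mem_erase.2 ⟨u.2.1,
            Finset.mem_powerset.2 (Finset.subset_erase.2 ⟨Finset.subset_univ _, hu⟩)⟩)
          val_injective.injOn (Finset.finite_toSet _)
    _ = 2 ^ (n - 1) - 1 := by
        rw [Set.ncard_coe_finset, Finset.card_erase_of_mem (Finset.empty_mem_powerset _),
          Finset.card_powerset, Finset.card_erase_of_mem (Finset.mem_univ _), Finset.card_univ,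
          Fintype.card_fin]

end BVert

namespace GcB

variable {n : ℕ}

theorem adj_of_not_disjoint {u v : BVert n} (huv : u ≠ v) (h : ¬Disjoint u.1 v.1) :
    (GcB n).Adj u v :=
  ⟨huv, Finset.disjoint_iff_inter_eq_empty.not.1 h⟩

theorem not_adj_of_disjoint {u v : BVert n} (h : Disjoint u.1 v.1) : ¬(GcB n).Adj u v :=
  fun hadj => hadj.2 (Finset.disjoint_iff_inter_eq_empty.1 h)

/-- For `x ∈ u` and `y ∈ v` the common neighbour is `{x, y}`, a proper subset as `n ≥ 3`. -/
theorem exists_adj_adj_of_disjoint (hn : 3 ≤ n) {u v : BVert n} (h : Disjoint u.1 v.1) :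
    ∃ w, (GcB n).Adj u w ∧ (GcB n).Adj w v := by
  obtain ⟨x, hx⟩ := u.val_nonempty
  obtain ⟨y, hy⟩ := v.val_nonempty
  have hxv : x ∉ v.1 := Finset.disjoint_left.1 h hx
  have hyu : y ∉ u.1 := Finset.disjoint_right.1 h hy
  have hxy : x ≠ y := fun hxy => hxv (hxy ▸ hy)
  have hproper : ({x, y} : Finset (Fin n)) ≠ Finset.univ := fun hxy_univ => by
    have := congrArg Finset.card hxy_univ
    rw [Finset.card_pair hxy, Finset.card_univ, Fintype.card_fin] at this
    omega
  let w : BVert n := ⟨{x, y}, (Finset.insert_nonempty x _).ne_empty, hproper⟩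
  refine ⟨w, adj_of_not_disjoint ?_ ?_, adj_of_not_disjoint ?_ ?_⟩
  · exact fun huw => hyu (congrArg Subtype.val huw ▸ by simp [w])
  · exact Finset.not_disjoint_iff.2 ⟨x, hx, by simp [w]⟩
  · exact fun hwv => hxv (congrArg Subtype.val hwv ▸ by simp [w])
  · exact Finset.not_disjoint_iff.2 ⟨y, by simp [w], hy⟩

theorem dist_eq_two (hn : 3 ≤ n) {u v : BVert n} (huv : u ≠ v) (h : Disjoint u.1 v.1) :
    (GcB n).dist u v = 2 :=
  have ⟨_, huw, hwv⟩ := exists_adj_adj_of_disjoint hn h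
  SimpleGraph.dist_eq_two_of_adj_of_adj huv (not_adj_of_disjoint h) huw hwv

theorem reachable (hn : 3 ≤ n) (u v : BVert n) : (GcB n).Reachable u v := by
  rcases eq_or_ne u v with rfl | huv
  · rfl
  by_cases h : Disjoint u.1 v.1
  · obtain ⟨w, huw, hwv⟩ := exists_adj_adj_of_disjoint hn h
    exact huw.reachable.trans hwv.reachable
  · exact (adj_of_not_disjoint huv h).reachable

theorem dist_le_two (hn : 3 ≤ n) (u v : BVert n) : (GcB n).dist u v ≤ 2 := by
  rcases eq_or_ne u v with rfl | huv
  · simp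
  by_cases h : Disjoint u.1 v.1
  · exact (dist_eq_two hn huv h).le
  · rw [SimpleGraph.dist_eq_one_iff_adj.2 (adj_of_not_disjoint huv h)]
    omega

theorem not_disjoint_of_notMem (hn : 3 ≤ n) {W : Set (BVert n)}
    (hW : IsStrongResolvingSet (GcB n) W) {u v : BVert n} (hu : u ∉ W) (hv : v ∉ W) :
    ¬Disjoint u.1 v.1 := by
  intro h
  rcases eq_or_ne u v with rfl | huv
  · exact u.val_nonempty.ne_empty (disjoint_self.1 h)
  have hmax : ∀ x y, (GcB n).dist x y ≤ (GcB n).dist u v :=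
    fun x y => dist_eq_two hn huv h ▸ dist_le_two hn x y
  rcases hW.mem_or_mem_of_forall_dist_le (reachable hn) huv hmax with hu' | hv'
  exacts [hu hu', hv hv']

theorem intersecting_insert_univ_image_compl (hn : 3 ≤ n) {W : Set (BVert n)}
    (hW : IsStrongResolvingSet (GcB n) W) :
    (insert Finset.univ (Subtype.val '' Wᶜ) : Set (Finset (Fin n))).Intersecting := by
  have : Nonempty (Fin n) := ⟨⟨0, by omega⟩⟩
  refine Set.Intersecting.insert ?_ Finset.univ_nonempty.ne_empty ?_
  · rintro _ ⟨u, hu, rfl⟩ _ ⟨v, hv, rfl⟩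
    exact not_disjoint_of_notMem hn hW hu hv
  · rintro _ ⟨u, -, rfl⟩
    obtain ⟨x, hx⟩ := BVert.val_nonempty u
    exact Finset.not_disjoint_iff.2 ⟨x, Finset.mem_univ x, hx⟩

theorem two_pow_pred_sub_one_le_card (hn : 3 ≤ n) {W : Set (BVert n)}
    (hW : IsStrongResolvingSet (GcB n) W) : 2 ^ (n - 1) - 1 ≤ Nat.card W := by
  set S : Set (Finset (Fin n)) := insert Finset.univ (Subtype.val '' Wᶜ)
  have hS : ((Set.toFinite S).toFinset : Set (Finset (Fin n))).Intersecting := by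
    rw [Set.Finite.coe_toFinset]
    exact intersecting_insert_univ_image_compl hn hW
  have hcardS : S.ncard = Wᶜ.ncard + 1 := by
    rw [Set.ncard_insert_of_notMem (by rintro ⟨u, -, hu⟩; exact u.2.2 hu)]
    exact congrArg (· + 1) (Set.ncard_image_of_injective Wᶜ BVert.val_injective)
  have hbound := hS.card_le
  rw [← Set.ncard_eq_toFinset_card, hcardS, Fintype.card_finset, Fintype.card_fin] at hbound
  have hsplit : W.ncard + Wᶜ.ncard = 2 ^ n - 2 := by
    rw [Set.ncard_add_ncard_compl, BVert.card_eq (by omega)]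
  have hpow : 2 ^ n = 2 * 2 ^ (n - 1) := by rw [← pow_succ']; congr 1; omega
  rw [Nat.card_coe_set_eq]
  omega

theorem stronglyResolves_compl (hn : 3 ≤ n) {z a : Fin n} {u v : BVert n} (hzu : z ∈ u.1)
    (hzv : z ∈ v.1) (hau : a ∈ u.1) (hav : a ∉ v.1) :
    StronglyResolves (GcB n) v.compl u v := by
  have hne : ∀ {x : BVert n}, z ∈ x.1 → x ≠ v.compl := fun hzx hx => by
    subst hx
    exact Finset.mem_compl.1 hzx hzv
  have hvu : (GcB n).dist v u = 1 := SimpleGraph.dist_eq_one_iff_adj.2 <|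
    adj_of_not_disjoint (fun h => hav (h ▸ hau)) (Finset.not_disjoint_iff.2 ⟨z, hzv, hzu⟩)
  have huc : (GcB n).dist u v.compl = 1 := SimpleGraph.dist_eq_one_iff_adj.2 <|
    adj_of_not_disjoint (hne hzu) (Finset.not_disjoint_iff.2 ⟨a, hau, by simpa using hav⟩)
  have hvc : (GcB n).dist v v.compl = 2 := dist_eq_two hn (hne hzv) disjoint_compl_right
  exact Or.inr (by rw [hvc, hvu, huc])

theorem isStrongResolvingSet_setOf_notMem (hn : 3 ≤ n) (z : Fin n) :
    IsStrongResolvingSet (GcB n) {u | z ∉ u.1} := by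
  intro u v huv
  by_cases hzu : z ∈ u.1
  swap; · exact ⟨u, hzu, stronglyResolves_self_left u v⟩
  by_cases hzv : z ∈ v.1
  swap; · exact ⟨v, hzv, stronglyResolves_self_right u v⟩
  by_cases huv' : u.1 ⊆ v.1
  · obtain ⟨a, hav, hau⟩ := Finset.not_subset.1 fun hvu =>
      huv (BVert.val_injective (huv'.antisymm hvu))
    exact ⟨u.compl, by simpa using hzu, (stronglyResolves_compl hn hzv hzu hav hau).symm⟩
  · obtain ⟨a, hau, hav⟩ := Finset.not_subset.1 huv'
    exact ⟨v.compl, by simpa using hzv, stronglyResolves_compl hn hzu hzv hau hav⟩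

end GcB

/-- for `n ≥ 3`, the strong metric dimension of `G^c(2^n)` equals
`2^n - 2^(n-1) - 1`. -/
theorem sdim_gc_boolean (n : ℕ) (hn : 3 ≤ n) :
    sdim (GcB n) = 2 ^ n - 2 ^ (n - 1) - 1 := by
  have hpow : 2 ^ n = 2 * 2 ^ (n - 1) := by rw [← pow_succ']; congr 1; omega
  rw [show 2 ^ n - 2 ^ (n - 1) - 1 = 2 ^ (n - 1) - 1 by omega]
  let z : Fin n := ⟨0, by omega⟩
  have hz : Nat.card {u : BVert n | z ∉ u.1} ∈
      {k | ∃ W : Set (BVert n), W.Finite ∧ IsStrongResolvingSet (GcB n) W ∧ Nat.card W = k} :=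
    ⟨_, Set.toFinite _, GcB.isStrongResolvingSet_setOf_notMem hn z, rfl⟩
  apply le_antisymm
  · calc sdim (GcB n) ≤ Nat.card {u : BVert n | z ∉ u.1} := Nat.sInf_le hz
      _ ≤ 2 ^ (n - 1) - 1 := (Nat.card_coe_set_eq _).trans_le (BVert.ncard_setOf_notMem_le z)
  · refine le_csInf ⟨_, hz⟩ ?_
    rintro _ ⟨W, -, hW, rfl⟩
    exact GcB.two_pow_pred_sub_one_le_card hn hW
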